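/- Let (a_n), (b_n), (c_n), (d_n), (e_n), (f_n), (g_n), (h_n), (i_n), (j_n) be the integer sequences with initial values (a_1,…,j_1) = (2,1,2,2,2,1,2,2,2,2) and, for n ≥ 2, a_n = c_{n−1} + g_{n−1}, b_n = c_{n−1}, c_n = a_{n−1} + d_{n−1}, d_n = a_{n−1} + e_{n−1}, e_n = a_{n−1} + f_{n−1}, f_n = g_{n−1}, g_n = a_{n−1} + h_{n−1}, h_n = a_{n−1} + i_{n−1}, i_n = a_{n−1} + j_{n−1}, j_n = a_{n−1} + b_{n−1}. Then the sequence a_n^{1/n} converges to a real number λ which is an eigenvalue of the 10×10 zero-one matrix of this linear recurrence, and λ > 1.9. -/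

import Mathlib

/-!
The recurrence is `x (n + 1) = M *ᵥ x n` for the nonnegative transfer matrix `M`, and every
root `λ > 1.9` of `λ⁹ = 2λ⁷ + 2λ⁶ + 2λ⁵ + λ⁴ + λ³ + 2λ² + 2λ + 3` (one exists by the
intermediate value theorem on `[1.9, 2]`) is an eigenvalue of `M` with an explicit positive
eigenvector `w`. Since `M` preserves the componentwise order, an initial
sandwich `c • w ≤ x 0 ≤ C • w` propagates to `c λⁿ • w ≤ x n ≤ C λⁿ • w`, hence `a n ≍ λⁿ` and
`a n ^ (1 / n) → λ`.
-/

open Filter Topology Matrix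

section PositiveEigenvector

variable {ι : Type*} [Fintype ι] {M : Matrix ι ι ℝ} {w : ι → ℝ} {r : ℝ}

theorem Matrix.mulVec_mono_of_nonneg (hM : ∀ i j, 0 ≤ M i j) {x y : ι → ℝ} (hxy : x ≤ y) :
    M *ᵥ x ≤ M *ᵥ y :=
  fun i => dotProduct_le_dotProduct_of_nonneg_left hxy (hM i)

theorem exists_smul_le_and_le_smul [Nonempty ι] {x : ι → ℝ} (hx : ∀ k, 0 < x k)
    (hw : ∀ k, 0 < w k) : ∃ c : ℝ, 0 < c ∧ ∃ C : ℝ, c • w ≤ x ∧ x ≤ C • w := by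
  obtain ⟨k₀, hk₀⟩ := Finite.exists_min fun k => x k / w k
  refine ⟨x k₀ / w k₀, div_pos (hx k₀) (hw k₀), ∑ k, x k / w k, fun k => ?_, fun k => ?_⟩
  · calc x k₀ / w k₀ * w k ≤ x k / w k * w k := mul_le_mul_of_nonneg_right (hk₀ k) (hw k).le
      _ = x k := div_mul_cancel₀ _ (hw k).ne'
  · calc x k = x k / w k * w k := (div_mul_cancel₀ _ (hw k).ne').symm
      _ ≤ (∑ k, x k / w k) * w k := by
        gcongr
        · exact (hw k).le
        · exact Finset.single_le_sum (fun k _ => (div_pos (hx k) (hw k)).le) (Finset.mem_univ k)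

variable (hM : ∀ i j, 0 ≤ M i j) (hMw : M *ᵥ w = r • w) {x : ℕ → ι → ℝ}
  (hx : ∀ n, x (n + 1) = M *ᵥ x n)
include hM hMw hx

theorem smul_pow_le_of_mulVec_eq_smul {c : ℝ} (h₀ : c • w ≤ x 0) (n : ℕ) :
    (c * r ^ n) • w ≤ x n := by
  induction n with
  | zero => simpa using h₀
  | succ n ih =>
    calc (c * r ^ (n + 1)) • w = M *ᵥ ((c * r ^ n) • w) := by
          rw [Matrix.mulVec_smul, hMw, smul_smul, pow_succ, mul_assoc]
      _ ≤ x (n + 1) := hx n ▸ Matrix.mulVec_mono_of_nonneg hM ih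

theorem le_smul_pow_of_mulVec_eq_smul {C : ℝ} (h₀ : x 0 ≤ C • w) (n : ℕ) :
    x n ≤ (C * r ^ n) • w := by
  induction n with
  | zero => simpa using h₀
  | succ n ih =>
    calc x (n + 1) ≤ M *ᵥ ((C * r ^ n) • w) := hx n ▸ Matrix.mulVec_mono_of_nonneg hM ih
      _ = (C * r ^ (n + 1)) • w := by
          rw [Matrix.mulVec_smul, hMw, smul_smul, pow_succ, mul_assoc]

end PositiveEigenvector

theorem Matrix.isRoot_charpoly_of_mulVec_eq_smul {ι K : Type*} [Fintype ι] [DecidableEq ι]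
    [Field K] {M : Matrix ι ι K} {w : ι → K} {r : K} (hw : w ≠ 0) (h : M *ᵥ w = r • w) :
    M.charpoly.IsRoot r := by
  rw [← Matrix.mem_spectrum_iff_isRoot_charpoly, ← Matrix.spectrum_toLin']
  exact Module.End.HasEigenvalue.mem_spectrum
    (Module.End.hasEigenvalue_of_hasEigenvector ⟨Module.End.mem_eigenspace_iff.mpr h, hw⟩)

theorem tendsto_rpow_one_div_of_pow_le_of_le_pow {u : ℕ → ℝ} {c C r : ℝ} (hc : 0 < c)
    (hr : 0 < r) (hu : ∀ᶠ n in atTop, c * r ^ n ≤ u n ∧ u n ≤ C * r ^ n) :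
    Tendsto (fun n : ℕ => u n ^ (1 / (n : ℝ))) atTop (𝓝 r) := by
  have hroot : ∀ {d : ℝ}, 0 < d →
      Tendsto (fun n : ℕ => (d * r ^ n) ^ (1 / (n : ℝ))) atTop (𝓝 r) := by
    intro d hd
    have hd1 : Tendsto (fun n : ℕ => d ^ (1 / (n : ℝ))) atTop (𝓝 1) := by
      simpa [Function.comp_def] using ((Real.continuousAt_const_rpow hd.ne').tendsto).comp
        (tendsto_const_div_atTop_nhds_zero_nat 1)
    refine (by simpa using hd1.mul_const r : Tendsto _ atTop (𝓝 r)).congr' ?_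
    filter_upwards [eventually_ne_atTop 0] with n hn
    rw [Real.mul_rpow hd.le (by positivity), one_div, Real.pow_rpow_inv_natCast hr.le hn]
  obtain ⟨n, hn⟩ := hu.exists
  have hC : 0 < C := pos_of_mul_pos_left ((mul_pos hc (pow_pos hr n)).trans_le (hn.1.trans hn.2))
    (pow_pos hr n).le
  refine tendsto_of_tendsto_of_tendsto_of_le_of_le' (hroot hc) (hroot hC) ?_ ?_ <;>
    filter_upwards [hu] with n hn
  · exact Real.rpow_le_rpow (by positivity) hn.1 (by positivity)
  · exact Real.rpow_le_rpow ((by positivity : (0 : ℝ) ≤ c * r ^ n).trans hn.1) hn.2 (by positivity)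

namespace H38

def transferMatrix : Matrix (Fin 10) (Fin 10) ℝ :=
  !![0, 0, 1, 0, 0, 0, 1, 0, 0, 0;
     0, 0, 1, 0, 0, 0, 0, 0, 0, 0;
     1, 0, 0, 1, 0, 0, 0, 0, 0, 0;
     1, 0, 0, 0, 1, 0, 0, 0, 0, 0;
     1, 0, 0, 0, 0, 1, 0, 0, 0, 0;
     0, 0, 0, 0, 0, 0, 1, 0, 0, 0;
     1, 0, 0, 0, 0, 0, 0, 1, 0, 0;
     1, 0, 0, 0, 0, 0, 0, 0, 1, 0;
     1, 0, 0, 0, 0, 0, 0, 0, 0, 1;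
     1, 1, 0, 0, 0, 0, 0, 0, 0, 0]

theorem transferMatrix_nonneg (i j : Fin 10) : 0 ≤ transferMatrix i j := by
  fin_cases i <;> fin_cases j <;> simp [transferMatrix]

theorem transferMatrix_mulVec (v : Fin 10 → ℝ) :
    transferMatrix *ᵥ v = ![v 2 + v 6, v 2, v 0 + v 3, v 0 + v 4, v 0 + v 5, v 6, v 0 + v 7,
      v 0 + v 8, v 0 + v 9, v 0 + v 1] := by
  ext k
  fin_cases k <;> simp [transferMatrix, Matrix.mulVec, dotProduct, Fin.sum_univ_succ]

theorem exists_root : ∃ r : ℝ, 1.9 < r ∧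
    r ^ 9 = 2 * r ^ 7 + 2 * r ^ 6 + 2 * r ^ 5 + r ^ 4 + r ^ 3 + 2 * r ^ 2 + 2 * r + 3 := by
  let p : ℝ → ℝ := fun r =>
    r ^ 9 - (2 * r ^ 7 + 2 * r ^ 6 + 2 * r ^ 5 + r ^ 4 + r ^ 3 + 2 * r ^ 2 + 2 * r + 3)
  have hp : ContinuousOn p (Set.Icc 1.9 2) := by fun_prop
  obtain ⟨r, hr, hpr⟩ := intermediate_value_Ioo (by norm_num) hp (by norm_num [p] : (0 : ℝ) ∈ _)
  exact ⟨r, hr.1, sub_eq_zero.mp hpr⟩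

/-- Solving `M w = r • w` from `w 0 = r⁹ - 1` by back-substitution along the recurrence. -/
def eigenvector (r : ℝ) : Fin 10 → ℝ :=
  ![r ^ 9 - 1,
    r ^ 7 + r ^ 6 + r ^ 5 + r ^ 3 + r ^ 2 + r + 1,
    r ^ 8 + r ^ 7 + r ^ 6 + r ^ 4 + r ^ 3 + r ^ 2 + r,
    r ^ 8 + r ^ 7 + r ^ 5 + r ^ 4 + r ^ 3 + r ^ 2 + 1,
    r ^ 8 + r ^ 6 + r ^ 5 + r ^ 4 + r ^ 3 + r + 1,
    r ^ 7 + r ^ 6 + r ^ 5 + r ^ 4 + r ^ 2 + r + 1,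
    r ^ 8 + r ^ 7 + r ^ 6 + r ^ 5 + r ^ 3 + r ^ 2 + r,
    r ^ 8 + r ^ 7 + r ^ 6 + r ^ 4 + r ^ 3 + r ^ 2 + 1,
    r ^ 8 + r ^ 7 + r ^ 5 + r ^ 4 + r ^ 3 + r + 1,
    r ^ 8 + r ^ 6 + r ^ 5 + r ^ 4 + r ^ 2 + r + 1]

theorem transferMatrix_mulVec_eigenvector {r : ℝ}
    (hr : r ^ 9 = 2 * r ^ 7 + 2 * r ^ 6 + 2 * r ^ 5 + r ^ 4 + r ^ 3 + 2 * r ^ 2 + 2 * r + 3) :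
    transferMatrix *ᵥ eigenvector r = r • eigenvector r := by
  rw [transferMatrix_mulVec]
  ext k
  fin_cases k
  · simp [eigenvector]
    linear_combination (-r) * hr
  all_goals simp [eigenvector]; ring

theorem eigenvector_pos {r : ℝ} (hr : 1 < r) (k : Fin 10) : 0 < eigenvector r k := by
  have hr0 : 0 < r := by linarith
  fin_cases k
  · simpa [eigenvector] using one_lt_pow₀ hr (by norm_num : 9 ≠ 0)
  all_goals simp [eigenvector]; positivity

end H38

/-- For the ten sequences arising from counting restricted SAWs on `H(3,8)`, the
sequence `a_n^{1/n}` converges to an eigenvalue `λ > 1.9` of the transfer matrix. -/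
theorem h38_growth_rate
    (a b c d e f g h i j : ℕ → ℤ)
    (ha1 : a 1 = 2) (hb1 : b 1 = 1) (hc1 : c 1 = 2) (hd1 : d 1 = 2) (he1 : e 1 = 2)
    (hf1 : f 1 = 1) (hg1 : g 1 = 2) (hh1 : h 1 = 2) (hi1 : i 1 = 2) (hj1 : j 1 = 2)
    (ha : ∀ n : ℕ, 2 ≤ n → a n = c (n - 1) + g (n - 1))
    (hb : ∀ n : ℕ, 2 ≤ n → b n = c (n - 1))
    (hc : ∀ n : ℕ, 2 ≤ n → c n = a (n - 1) + d (n - 1))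
    (hd : ∀ n : ℕ, 2 ≤ n → d n = a (n - 1) + e (n - 1))
    (he : ∀ n : ℕ, 2 ≤ n → e n = a (n - 1) + f (n - 1))
    (hf : ∀ n : ℕ, 2 ≤ n → f n = g (n - 1))
    (hg : ∀ n : ℕ, 2 ≤ n → g n = a (n - 1) + h (n - 1))
    (hh : ∀ n : ℕ, 2 ≤ n → h n = a (n - 1) + i (n - 1))
    (hi : ∀ n : ℕ, 2 ≤ n → i n = a (n - 1) + j (n - 1))
    (hj : ∀ n : ℕ, 2 ≤ n → j n = a (n - 1) + b (n - 1)) :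
    ∃ lam : ℝ,
      Tendsto (fun n : ℕ => (a n : ℝ) ^ (1 / (n : ℝ))) atTop (nhds lam) ∧
      (Matrix.charpoly
        (!![0, 0, 1, 0, 0, 0, 1, 0, 0, 0;
            0, 0, 1, 0, 0, 0, 0, 0, 0, 0;
            1, 0, 0, 1, 0, 0, 0, 0, 0, 0;
            1, 0, 0, 0, 1, 0, 0, 0, 0, 0;
            1, 0, 0, 0, 0, 1, 0, 0, 0, 0;
            0, 0, 0, 0, 0, 0, 1, 0, 0, 0;
            1, 0, 0, 0, 0, 0, 0, 1, 0, 0;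
            1, 0, 0, 0, 0, 0, 0, 0, 1, 0;
            1, 0, 0, 0, 0, 0, 0, 0, 0, 1;
            1, 1, 0, 0, 0, 0, 0, 0, 0, 0] : Matrix (Fin 10) (Fin 10) ℝ)).IsRoot lam ∧
      1.9 < lam := by
  obtain ⟨r, hr, hroot⟩ := H38.exists_root
  have hr1 : 1 < r := by linarith
  set w := H38.eigenvector r
  have hw := H38.eigenvector_pos hr1
  have hMw : H38.transferMatrix *ᵥ w = r • w := H38.transferMatrix_mulVec_eigenvector hroot
  let x : ℕ → Fin 10 → ℝ := fun n => ![(a (n + 1) : ℝ), b (n + 1), c (n + 1), d (n + 1),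
    e (n + 1), f (n + 1), g (n + 1), h (n + 1), i (n + 1), j (n + 1)]
  have hx : ∀ n, x (n + 1) = H38.transferMatrix *ᵥ x n := by
    intro n
    rw [H38.transferMatrix_mulVec]
    simp [x, ha (n + 2) le_add_self, hb (n + 2) le_add_self, hc (n + 2) le_add_self,
      hd (n + 2) le_add_self, he (n + 2) le_add_self, hf (n + 2) le_add_self,
      hg (n + 2) le_add_self, hh (n + 2) le_add_self, hi (n + 2) le_add_self,
      hj (n + 2) le_add_self]
  have hx0 : ∀ k, 0 < x 0 k := by
    intro k
    fin_cases k <;> simp [x, ha1, hb1, hc1, hd1, he1, hf1, hg1, hh1, hi1, hj1]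
  obtain ⟨κ, hκ, K, hlow, hupp⟩ := exists_smul_le_and_le_smul hx0 hw
  have hgrowth : ∀ᶠ n in atTop,
      κ * w 0 / r * r ^ n ≤ (a n : ℝ) ∧ (a n : ℝ) ≤ K * w 0 / r * r ^ n := by
    filter_upwards [eventually_ge_atTop 1] with n hn
    obtain ⟨m, rfl⟩ := Nat.exists_eq_add_of_le' hn
    have hshift : ∀ t : ℝ, t * w 0 / r * r ^ (m + 1) = (t * r ^ m) • w 0 := by
      intro t; field_simp; ring
    simp only [hshift]
    exact ⟨smul_pow_le_of_mulVec_eq_smul H38.transferMatrix_nonneg hMw hx hlow m 0,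
      le_smul_pow_of_mulVec_eq_smul H38.transferMatrix_nonneg hMw hx hupp m 0⟩
  refine ⟨r, tendsto_rpow_one_div_of_pow_le_of_le_pow
    (div_pos (mul_pos hκ (hw 0)) (by positivity)) (by positivity) hgrowth, ?_, hr⟩
  exact Matrix.isRoot_charpoly_of_mulVec_eq_smul (fun h0 => (hw 0).ne' (congrFun h0 0)) hMw
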